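/- Let O be a measurable space, let μ and ν be probability measures on O, and let ε ≥ 0 and δ ≥ 0. Suppose that for every measurable set S ⊆ O we have μ(S) ≤ e^ε · ν(S) + δ. Then for every measurable function f : O → ℝ with 0 ≤ f ≤ 1, setting TP = ∫ f dμ and FP = ∫ f dν, we have TP − δ ≤ e^ε · FP. -/

import Mathlib

/-!
By the layer-cake formula, `∫ f dμ = ∫₀¹ μ {f ≥ t} dt` for `0 ≤ f ≤ 1`. Applying the
`(ε, δ)` inequality to each superlevel set `{f ≥ t}` and integrating over `t ∈ (0, 1]`
gives `∫ f dμ ≤ e^ε ∫ f dν + δ`; the interval has length one, so `δ` is not enlarged.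
-/

open MeasureTheory Set

section

variable {O : Type*} [MeasurableSpace O]

lemma antitone_measureReal_setOf_le (μ : Measure O) [IsFiniteMeasure μ] (f : O → ℝ) :
    Antitone fun t : ℝ => μ.real {a | t ≤ f a} :=
  fun _ _ hst => measureReal_mono fun _ ha => hst.trans ha

lemma integral_eq_integral_Ioc_measureReal_le (μ : Measure O) [IsFiniteMeasure μ]
    {f : O → ℝ} (hf : Measurable f) (hf0 : ∀ o, 0 ≤ f o) (hf1 : ∀ o, f o ≤ 1) :
    ∫ o, f o ∂μ = ∫ t in Ioc 0 1, μ.real {a | t ≤ f a} :=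
  Integrable.integral_eq_integral_Ioc_meas_le
    (.of_mem_Icc 0 1 hf.aemeasurable (ae_of_all _ fun o => ⟨hf0 o, hf1 o⟩))
    (ae_of_all _ hf0) (ae_of_all _ hf1)

lemma integrableOn_Ioc_measureReal_setOf_le (μ : Measure O) [IsFiniteMeasure μ]
    (f : O → ℝ) (a b : ℝ) : IntegrableOn (fun t : ℝ => μ.real {o | t ≤ f o}) (Ioc a b) :=
  ((antitone_measureReal_setOf_le μ f).locallyIntegrable.integrableOn_isCompact
    isCompact_Icc).mono_set Ioc_subset_Icc_self

theorem integral_le_mul_integral_add_of_measureReal_le {μ ν : Measure O}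
    [IsFiniteMeasure μ] [IsFiniteMeasure ν] {c δ : ℝ}
    (h : ∀ S, MeasurableSet S → μ.real S ≤ c * ν.real S + δ)
    {f : O → ℝ} (hf : Measurable f) (hf0 : ∀ o, 0 ≤ f o) (hf1 : ∀ o, f o ≤ 1) :
    ∫ o, f o ∂μ ≤ c * (∫ o, f o ∂ν) + δ := by
  have hν := integrableOn_Ioc_measureReal_setOf_le ν f 0 1
  have hδ : IntegrableOn (fun _ : ℝ => δ) (Ioc 0 1) := integrableOn_const measure_Ioc_lt_top.ne
  rw [integral_eq_integral_Ioc_measureReal_le μ hf hf0 hf1,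
    integral_eq_integral_Ioc_measureReal_le ν hf hf0 hf1]
  calc ∫ t in Ioc 0 1, μ.real {a | t ≤ f a}
      ≤ ∫ t in Ioc 0 1, (c * ν.real {a | t ≤ f a} + δ) :=
        setIntegral_mono_on (integrableOn_Ioc_measureReal_setOf_le μ f 0 1)
          ((hν.const_mul c).add hδ) measurableSet_Ioc
          fun t _ => h _ (hf measurableSet_Ici)
    _ = c * (∫ t in Ioc 0 1, ν.real {a | t ≤ f a}) + δ := by
        rw [integral_add (hν.const_mul c) hδ, integral_const_mul, setIntegral_const]
        simp

end

theorem dp_tp_fp_bound_general {O : Type*} [MeasurableSpace O]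
    (μ ν : Measure O) [IsProbabilityMeasure μ] [IsProbabilityMeasure ν]
    (ε δ : ℝ)
    (hDP : ∀ S : Set O, MeasurableSet S →
      (μ S).toReal ≤ Real.exp ε * (ν S).toReal + δ)
    (f : O → ℝ) (hf : Measurable f) (hf0 : ∀ o, 0 ≤ f o) (hf1 : ∀ o, f o ≤ 1) :
    (∫ o, f o ∂μ) - δ ≤ Real.exp ε * ∫ o, f o ∂ν := by
  linarith [integral_le_mul_integral_add_of_measureReal_le hDP hf hf0 hf1]

/-- If (μ, ν) satisfies the (ε,δ)-DP inequality μ(S) ≤ e^ε · ν(S) + δ for all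
measurable S, then for every measurable attacker f : O → [0,1], with
TP = ∫ f dμ and FP = ∫ f dν, we have TP − δ ≤ e^ε · FP. -/
theorem dp_tp_fp_bound {O : Type*} [MeasurableSpace O]
    (μ ν : Measure O) [IsProbabilityMeasure μ] [IsProbabilityMeasure ν]
    (ε δ : ℝ) (hε : 0 ≤ ε) (hδ : 0 ≤ δ)
    (hDP : ∀ S : Set O, MeasurableSet S →
      (μ S).toReal ≤ Real.exp ε * (ν S).toReal + δ)
    (f : O → ℝ) (hf : Measurable f) (hf0 : ∀ o, 0 ≤ f o) (hf1 : ∀ o, f o ≤ 1) :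
    (∫ o, f o ∂μ) - δ ≤ Real.exp ε * ∫ o, f o ∂ν :=
  dp_tp_fp_bound_general μ ν ε δ hDP f hf hf0 hf1
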